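/- arXiv:2405.01414 — 2 statements merged into one kernel-verified Lean document; each statement's English description precedes it below -/
import Mathlib

section
/- Let f : [a,b] → ℝ be a smooth nonnegative function whose derivative changes sign at most C times on [a,b], where a, b are integers with a ≤ b. Then ∑_{n=a}^{b} f(n) ≤ ∫_a^b f(w) dw + 2(C+1) · max_{x ∈ [a,b]} f(x). -/
open MeasureTheory

private lemma Icc_succ_right' (m k : ℤ) (h : m ≤ k + 1) :
    Finset.Icc m (k + 1) = insert (k + 1) (Finset.Icc m k) := by
  ext n
  simp only [Finset.mem_Icc, Finset.mem_insert]
  omega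

private lemma const_le_integral (f : ℝ → ℝ) (hf : Continuous f) (c : ℝ) (v : ℝ)
    (hv : ∀ x ∈ Set.Icc c (c + 1), v ≤ f x) :
    v ≤ ∫ x in c..(c + 1), f x := by
  have h0 : v = ∫ _ in c..(c + 1), (v : ℝ) := by simp
  rw [h0]
  apply intervalIntegral.integral_mono_on (by linarith)
    intervalIntegrable_const (hf.intervalIntegrable _ _)
  exact hv

/-- Bound for an increasing piece. -/
private lemma inc_sum (f : ℝ → ℝ) (hf : Continuous f) (m : ℤ) :
    ∀ k : ℤ, m ≤ k → MonotoneOn f (Set.Icc (m : ℝ) (k : ℝ)) →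
      ∑ n ∈ Finset.Icc m k, f (n : ℝ) ≤ (∫ x in (m : ℝ)..(k : ℝ), f x) + f (k : ℝ) := by
  intro k hk
  refine Int.le_induction (motive := fun k _ => MonotoneOn f (Set.Icc (m : ℝ) (k : ℝ)) →
    ∑ n ∈ Finset.Icc m k, f (n : ℝ) ≤ (∫ x in (m : ℝ)..(k : ℝ), f x) + f (k : ℝ)) ?_ ?_ k hk
  · intro _; simp
  · intro k hk ih hmono
    have hsub : Set.Icc (m : ℝ) (k : ℝ) ⊆ Set.Icc (m : ℝ) ((k + 1 : ℤ) : ℝ) := by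
      apply Set.Icc_subset_Icc_right; push_cast; linarith
    have hmk : (m : ℝ) ≤ k := by exact_mod_cast hk
    have ih' := ih (hmono.mono hsub)
    rw [Icc_succ_right' m k (by omega), Finset.sum_insert (by simp)]
    have hstep : f (k : ℝ) ≤ ∫ x in (k : ℝ)..((k : ℝ) + 1), f x := by
      apply const_le_integral f hf _ _
      intro x hx
      apply hmono ⟨hmk, by push_cast; linarith [hx.2]⟩
        ⟨le_trans hmk hx.1, by push_cast; linarith [hx.2]⟩ hx.1
    have hadd : (∫ x in (m : ℝ)..(k : ℝ), f x) + (∫ x in (k : ℝ)..((k : ℝ) + 1), f x)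
        = ∫ x in (m : ℝ)..((k : ℝ) + 1), f x :=
      intervalIntegral.integral_add_adjacent_intervals
        (hf.intervalIntegrable _ _) (hf.intervalIntegrable _ _)
    have hcast : ((k + 1 : ℤ) : ℝ) = (k : ℝ) + 1 := by push_cast; ring
    rw [hcast]
    linarith [ih']

/-- Bound for a decreasing piece. -/
private lemma dec_sum (f : ℝ → ℝ) (hf : Continuous f) (m : ℤ) :
    ∀ k : ℤ, m ≤ k → AntitoneOn f (Set.Icc (m : ℝ) (k : ℝ)) →
      ∑ n ∈ Finset.Icc m k, f (n : ℝ) ≤ (∫ x in (m : ℝ)..(k : ℝ), f x) + f (m : ℝ) := by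
  intro k hk
  refine Int.le_induction (motive := fun k _ => AntitoneOn f (Set.Icc (m : ℝ) (k : ℝ)) →
    ∑ n ∈ Finset.Icc m k, f (n : ℝ) ≤ (∫ x in (m : ℝ)..(k : ℝ), f x) + f (m : ℝ)) ?_ ?_ k hk
  · intro _; simp
  · intro k hk ih hmono
    have hsub : Set.Icc (m : ℝ) (k : ℝ) ⊆ Set.Icc (m : ℝ) ((k + 1 : ℤ) : ℝ) := by
      apply Set.Icc_subset_Icc_right; push_cast; linarith
    have hmk : (m : ℝ) ≤ k := by exact_mod_cast hk
    have ih' := ih (hmono.mono hsub)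
    rw [Icc_succ_right' m k (by omega), Finset.sum_insert (by simp)]
    have hstep : f ((k : ℝ) + 1) ≤ ∫ x in (k : ℝ)..((k : ℝ) + 1), f x := by
      apply const_le_integral f hf _ _
      intro x hx
      apply hmono ⟨le_trans hmk hx.1, by push_cast; linarith [hx.2]⟩
        ⟨by linarith, by push_cast; linarith⟩ hx.2
    have hadd : (∫ x in (m : ℝ)..(k : ℝ), f x) + (∫ x in (k : ℝ)..((k : ℝ) + 1), f x)
        = ∫ x in (m : ℝ)..((k : ℝ) + 1), f x :=
      intervalIntegral.integral_add_adjacent_intervals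
        (hf.intervalIntegrable _ _) (hf.intervalIntegrable _ _)
    have hcast : ((k + 1 : ℤ) : ℝ) = (k : ℝ) + 1 := by push_cast; ring
    rw [hcast]
    linarith [ih']

private lemma sum_biUnion_le'' {ι : Type*} [DecidableEq ι] (s : Finset ι) (g : ι → Finset ℤ)
    (f : ℤ → ℝ) (h : ∀ i ∈ s, ∀ x ∈ g i, 0 ≤ f x) :
    ∑ x ∈ s.biUnion g, f x ≤ ∑ i ∈ s, ∑ x ∈ g i, f x := by
  induction s using Finset.induction with
  | empty => simp
  | @insert a s ha ih =>
    rw [Finset.biUnion_insert, Finset.sum_insert ha]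
    have h1 : ∑ x ∈ g a ∪ s.biUnion g, f x ≤ (∑ x ∈ g a, f x) + ∑ x ∈ s.biUnion g, f x := by
      have := Finset.sum_union_inter (s₁ := g a) (s₂ := s.biUnion g) (f := f)
      have hnn : 0 ≤ ∑ x ∈ g a ∩ s.biUnion g, f x :=
        Finset.sum_nonneg fun x hx =>
          h a (Finset.mem_insert_self a s) x (Finset.mem_inter.mp hx).1
      linarith
    have h2 := ih fun i hi x hx => h i (Finset.mem_insert_of_mem hi) x hx
    linarith

/-- A sum of a smooth nonnegative function whose derivative changes sign at most
`C` times is bounded by the integral plus `2(C+1)` times the maximum. -/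
theorem sum_le_integral_add_max (a b : ℤ) (hab : a ≤ b) (C : ℕ) (f : ℝ → ℝ)
    (hf : ContDiff ℝ (⊤ : ℕ∞) f)
    (hpos : ∀ x ∈ Set.Icc (a : ℝ) (b : ℝ), 0 ≤ f x)
    (t : ℕ → ℝ) (ht0 : t 0 = a) (htC : t (C + 1) = b) (htmono : Monotone t)
    (hpieces : ∀ i < C + 1,
      MonotoneOn f (Set.Icc (t i) (t (i + 1))) ∨ AntitoneOn f (Set.Icc (t i) (t (i + 1)))) :
    ∑ n ∈ Finset.Icc a b, f (n : ℝ) ≤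
      (∫ w in (a : ℝ)..(b : ℝ), f w) + 2 * (C + 1) * sSup (f '' Set.Icc (a : ℝ) (b : ℝ)) := by
  have hcont : Continuous f := hf.continuous
  set M := sSup (f '' Set.Icc (a : ℝ) (b : ℝ)) with hM
  have habR : (a : ℝ) ≤ b := by exact_mod_cast hab
  have hbdd : BddAbove (f '' Set.Icc (a : ℝ) (b : ℝ)) :=
    ((isCompact_Icc).image hcont).bddAbove
  have hMle : ∀ x ∈ Set.Icc (a : ℝ) (b : ℝ), f x ≤ M :=
    fun x hx => le_csSup hbdd ⟨x, hx, rfl⟩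
  have haI : (a : ℝ) ∈ Set.Icc (a : ℝ) (b : ℝ) := ⟨le_refl _, habR⟩
  have hM0 : 0 ≤ M := le_trans (hpos _ haI) (hMle _ haI)
  -- endpoints of pieces lie in [a, b]
  have hta : ∀ i, (a : ℝ) ≤ t i := fun i => ht0 ▸ htmono (Nat.zero_le i)
  have htb : ∀ i, i ≤ C + 1 → t i ≤ b := fun i hi => htC ▸ htmono hi
  -- cover of the integers
  have hcover : ∀ n : ℤ, a ≤ n → n ≤ b → ∃ i < C + 1, t i ≤ n ∧ (n : ℝ) ≤ t (i + 1) := by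
    intro n hn1 hn2
    have hnR1 : (a : ℝ) ≤ n := by exact_mod_cast hn1
    have hnR2 : (n : ℝ) ≤ b := by exact_mod_cast hn2
    by_contra hcon
    push_neg at hcon
    have key : ∀ i, i ≤ C + 1 → t i ≤ n := by
      intro i
      induction i with
      | zero => intro _; rw [ht0]; exact hnR1
      | succ j ihj =>
        intro hj
        have hj' : j < C + 1 := by omega
        have h1 := ihj (by omega)
        rcases lt_or_ge (n : ℝ) (t (j + 1)) with h | h
        · exact absurd (hcon j hj' h1) (not_lt.mpr h.le)
        · exact h
    have := key (C + 1) le_rfl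
    rw [htC] at this
    have hnb : (n : ℝ) = b := le_antisymm hnR2 this
    have hC := hcon C (by omega)
    have h1 : t C ≤ n := by
      have := htb C (by omega); rw [← hnb] at this; exact this
    have := hC h1
    rw [htC] at this
    linarith [hnb.le]
  -- finset pieces
  set g : ℕ → Finset ℤ := fun i => Finset.Icc ⌈t i⌉ ⌊t (i + 1)⌋ with hg
  have hsubset : Finset.Icc a b ⊆ (Finset.range (C + 1)).biUnion g := by
    intro n hn
    rw [Finset.mem_Icc] at hn
    obtain ⟨i, hi, h1, h2⟩ := hcover n hn.1 hn.2
    refine Finset.mem_biUnion.mpr ⟨i, Finset.mem_range.mpr hi, ?_⟩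
    rw [hg, Finset.mem_Icc]
    exact ⟨Int.ceil_le.mpr h1, Int.le_floor.mpr h2⟩
  -- membership in pieces implies membership in [a,b]
  have hmem : ∀ i, i < C + 1 → ∀ n ∈ g i, (n : ℝ) ∈ Set.Icc (a : ℝ) (b : ℝ) := by
    intro i hi n hn
    rw [hg, Finset.mem_Icc] at hn
    have h1 : t i ≤ n := le_trans (Int.le_ceil _) (by exact_mod_cast hn.1)
    have h2 : (n : ℝ) ≤ t (i + 1) := le_trans (by exact_mod_cast hn.2) (Int.floor_le _)
    exact ⟨le_trans (hta i) h1, le_trans h2 (htb (i + 1) (by omega))⟩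
  -- per-piece bound
  have hpiece : ∀ i, i < C + 1 →
      ∑ n ∈ g i, f (n : ℝ) ≤ (∫ x in (t i)..(t (i + 1)), f x) + 2 * M := by
    intro i hi
    have hti : t i ≤ t (i + 1) := htmono (by omega)
    have hIcc : Set.Icc (t i) (t (i + 1)) ⊆ Set.Icc (a : ℝ) (b : ℝ) :=
      Set.Icc_subset_Icc (hta i) (htb (i + 1) (by omega))
    have hint0 : 0 ≤ ∫ x in (t i)..(t (i + 1)), f x := by
      apply intervalIntegral.integral_nonneg hti
      intro x hx; exact hpos x (hIcc hx)
    rcases le_or_gt (⌈t i⌉ : ℤ) ⌊t (i + 1)⌋ with hmk | hmk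
    · -- nonempty piece
      set m := ⌈t i⌉ with hm
      set k := ⌊t (i + 1)⌋ with hk
      have hm1 : t i ≤ m := Int.le_ceil _
      have hk1 : (k : ℝ) ≤ t (i + 1) := Int.floor_le _
      have hmkR : (m : ℝ) ≤ k := by exact_mod_cast hmk
      have hsub2 : Set.Icc (m : ℝ) (k : ℝ) ⊆ Set.Icc (t i) (t (i + 1)) :=
        Set.Icc_subset_Icc hm1 hk1
      have hintsub : (∫ x in (m : ℝ)..(k : ℝ), f x) ≤ ∫ x in (t i)..(t (i + 1)), f x := by
        have e1 : (∫ x in (t i)..(m : ℝ), f x) + (∫ x in (m : ℝ)..(k : ℝ), f x)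
            = ∫ x in (t i)..(k : ℝ), f x :=
          intervalIntegral.integral_add_adjacent_intervals
            (hcont.intervalIntegrable _ _) (hcont.intervalIntegrable _ _)
        have e2 : (∫ x in (t i)..(k : ℝ), f x) + (∫ x in (k : ℝ)..(t (i + 1)), f x)
            = ∫ x in (t i)..(t (i + 1)), f x :=
          intervalIntegral.integral_add_adjacent_intervals
            (hcont.intervalIntegrable _ _) (hcont.intervalIntegrable _ _)
        have p1 : 0 ≤ ∫ x in (t i)..(m : ℝ), f x := by
          apply intervalIntegral.integral_nonneg hm1
          intro x hx
          exact hpos x (hIcc ⟨hx.1, le_trans hx.2 (le_trans hmkR hk1)⟩)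
        have p2 : 0 ≤ ∫ x in (k : ℝ)..(t (i + 1)), f x := by
          apply intervalIntegral.integral_nonneg hk1
          intro x hx
          exact hpos x (hIcc ⟨le_trans (le_trans hm1 hmkR) hx.1, hx.2⟩)
        linarith
      rcases hpieces i hi with hmono | hanti
      · have := inc_sum f hcont m k hmk (hmono.mono hsub2)
        have hfk : f (k : ℝ) ≤ M :=
          hMle _ (hIcc (hsub2 ⟨hmkR, le_refl _⟩))
        calc ∑ n ∈ g i, f (n : ℝ) ≤ (∫ x in (m : ℝ)..(k : ℝ), f x) + f (k : ℝ) := this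
          _ ≤ (∫ x in (t i)..(t (i + 1)), f x) + 2 * M := by linarith
      · have := dec_sum f hcont m k hmk (hanti.mono hsub2)
        have hfm : f (m : ℝ) ≤ M :=
          hMle _ (hIcc (hsub2 ⟨le_refl _, hmkR⟩))
        calc ∑ n ∈ g i, f (n : ℝ) ≤ (∫ x in (m : ℝ)..(k : ℝ), f x) + f (m : ℝ) := this
          _ ≤ (∫ x in (t i)..(t (i + 1)), f x) + 2 * M := by linarith
    · -- empty piece
      have : g i = ∅ := by rw [hg]; exact Finset.Icc_eq_empty (by omega)
      rw [this]
      simp only [Finset.sum_empty]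
      linarith
  -- assemble
  have step1 : ∑ n ∈ Finset.Icc a b, f (n : ℝ) ≤
      ∑ n ∈ (Finset.range (C + 1)).biUnion g, f (n : ℝ) := by
    apply Finset.sum_le_sum_of_subset_of_nonneg hsubset
    intro n hn _
    obtain ⟨i, hi, hni⟩ := Finset.mem_biUnion.mp hn
    exact hpos _ (hmem i (Finset.mem_range.mp hi) n hni)
  have step2 : ∑ n ∈ (Finset.range (C + 1)).biUnion g, f (n : ℝ) ≤
      ∑ i ∈ Finset.range (C + 1), ∑ n ∈ g i, f (n : ℝ) := by
    apply sum_biUnion_le''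
    intro i hi n hn
    exact hpos _ (hmem i (Finset.mem_range.mp hi) n hn)
  have step3 : ∑ i ∈ Finset.range (C + 1), ∑ n ∈ g i, f (n : ℝ) ≤
      ∑ i ∈ Finset.range (C + 1), ((∫ x in (t i)..(t (i + 1)), f x) + 2 * M) := by
    apply Finset.sum_le_sum
    intro i hi
    exact hpiece i (Finset.mem_range.mp hi)
  have step4 : ∑ i ∈ Finset.range (C + 1), ((∫ x in (t i)..(t (i + 1)), f x) + 2 * M)
      = (∫ w in (a : ℝ)..(b : ℝ), f w) + 2 * (C + 1) * M := by
    rw [Finset.sum_add_distrib, Finset.sum_const, Finset.card_range]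
    have : ∑ i ∈ Finset.range (C + 1), ∫ x in (t i)..(t (i + 1)), f x
        = ∫ x in (t 0)..(t (C + 1)), f x :=
      intervalIntegral.sum_integral_adjacent_intervals
        (fun k _ => hcont.intervalIntegrable _ _)
    rw [this, ht0, htC]
    ring
  linarith
end

section
/- Fix real m ≥ 1 and integer k ≥ 4. Then ∑_{n > m, n ∈ ℤ} (n/m)^{-k + 3/2 + 2ε}·(n/m - 1)^{2ε} ≤ A(ε)·(m/k + 1) for every ε ∈ (0, 1/4) and some constant A(ε), for all k with k - 5/2 - 4ε ≥ 1. -/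
/-!
For `n > m` the summand is at most `(n/m)^(-s)` with `s = k - 3/2 - 4ε`, since `n/m - 1 ≤ n/m`.
In `∑_{n > m} (n/m)^(-s)` the first term is at most `1`, and the integral test bounds the rest by
`m^s ∫_N^∞ x^(-s) dx ≤ m / (s - 1)`, where `N > m` is the first integer; finally `s - 1 ≥ k/8`.
-/

open Set MeasureTheory

theorem rpow_mul_rpow_sub_one_le_rpow_add {y r δ : ℝ} (hy : 1 ≤ y) (hδ : 0 ≤ δ) :
    y ^ r * (y - 1) ^ δ ≤ y ^ (r + δ) := by
  have hy₀ : 0 < y := by linarith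
  rw [Real.rpow_add hy₀]
  gcongr
  linarith

theorem tsum_natCast_add_succ_rpow_neg_le {s : ℝ} (hs : 1 < s) {N : ℕ} (hN : 0 < N) :
    ∑' n : ℕ, ((n + N + 1 : ℕ) : ℝ) ^ (-s) ≤ (N : ℝ) ^ (1 - s) / (s - 1) := by
  have hN' : (0 : ℝ) < N := by exact_mod_cast hN
  have hanti : AntitoneOn (fun x : ℝ => x ^ (-s)) (Ici (N : ℝ)) :=
    (Real.antitoneOn_rpow_Ioi_of_exponent_nonpos (by linarith)).mono (Ici_subset_Ioi.2 hN')
  calc ∑' n : ℕ, ((n + N + 1 : ℕ) : ℝ) ^ (-s)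
      ≤ ∫ x in Ioi (N : ℝ), x ^ (-s) :=
        hanti.tsum_comp_add_le_integral N (integrableOn_Ioi_rpow_of_lt (by linarith) hN')
          fun x hx => Real.rpow_nonneg (hN'.trans hx).le _
    _ = (N : ℝ) ^ (1 - s) / (s - 1) := by
        rw [integral_Ioi_rpow_of_lt (by linarith) hN', ← neg_div_neg_eq, neg_neg]
        ring_nf

theorem summable_and_tsum_ite_lt_div_rpow_neg_le {m s : ℝ} (hm : 0 < m) (hs : 1 < s) :
    Summable (fun n : ℕ => if m < n then ((n : ℝ) / m) ^ (-s) else 0) ∧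
      ∑' n : ℕ, (if m < n then ((n : ℝ) / m) ^ (-s) else 0) ≤ 1 + m / (s - 1) := by
  set g : ℕ → ℝ := fun n => if m < n then ((n : ℝ) / m) ^ (-s) else 0
  set N := ⌊m⌋₊ + 1
  have hlt_iff (n : ℕ) : m < n ↔ N ≤ n := (Nat.floor_lt hm.le).symm.trans Nat.lt_iff_add_one_le
  have hmN : m < N := (hlt_iff N).2 le_rfl
  have hg_shift (i : ℕ) : g (i + N) = ((i + N : ℕ) : ℝ) ^ (-s) / m ^ (-s) := by
    simp only [g, if_pos ((hlt_iff _).2 (Nat.le_add_left N i))]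
    exact Real.div_rpow (Nat.cast_nonneg _) hm.le _
  have hsum_shift : Summable fun i => g (i + N) := by
    simp only [hg_shift]
    exact ((summable_nat_add_iff N).2 (Real.summable_nat_rpow.2 (by linarith))).div_const _
  have hsum : Summable g := (summable_nat_add_iff N).1 hsum_shift
  have hhead : ∑ i ∈ Finset.range N, g i = 0 :=
    Finset.sum_eq_zero fun i hi => if_neg (by simpa [hlt_iff] using hi)
  have hfirst : g N ≤ 1 := by
    simp only [g, if_pos hmN]
    exact Real.rpow_le_one_of_one_le_of_nonpos ((one_le_div hm).2 hmN.le) (by linarith)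
  have htail : ∑' i : ℕ, g (i + 1 + N) ≤ m / (s - 1) := by
    simp_rw [hg_shift, add_right_comm _ 1 N, tsum_div_const]
    calc (∑' i : ℕ, ((i + N + 1 : ℕ) : ℝ) ^ (-s)) / m ^ (-s)
        ≤ (N : ℝ) ^ (1 - s) / (s - 1) / m ^ (-s) :=
          div_le_div_of_nonneg_right (tsum_natCast_add_succ_rpow_neg_le hs (Nat.succ_pos _))
            (by positivity)
      _ ≤ m ^ (1 - s) / (s - 1) / m ^ (-s) := by
          gcongr ?_ / _ / _
          exact Real.rpow_le_rpow_of_nonpos hm hmN.le (by linarith)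
      _ = m / (s - 1) := by
          rw [div_right_comm, ← Real.rpow_sub hm, sub_neg_eq_add, sub_add_cancel, Real.rpow_one]
  refine ⟨hsum, ?_⟩
  rw [← hsum.sum_add_tsum_nat_add N, hhead, zero_add, hsum_shift.tsum_eq_zero_add, zero_add]
  exact add_le_add hfirst htail

/-- Tail sum bound: `∑_{n > m} (n/m)^{-k+3/2+2ε} (n/m - 1)^{2ε} ≤ A(ε)(m/k + 1)`. -/
theorem tail_sum_bound (ε : ℝ) (hε₀ : 0 < ε) (hε₁ : ε < 1/4) :
    ∃ A : ℝ, 0 < A ∧ ∀ m : ℝ, 1 ≤ m → ∀ k : ℕ, 4 ≤ k → 1 ≤ (k : ℝ) - 5/2 - 4 * ε →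
      Summable (fun n : ℕ => if m < (n : ℝ) then
          ((n : ℝ) / m) ^ (-(k : ℝ) + 3/2 + 2 * ε) * ((n : ℝ) / m - 1) ^ (2 * ε) else 0) ∧
      ∑' n : ℕ, (if m < (n : ℝ) then
          ((n : ℝ) / m) ^ (-(k : ℝ) + 3/2 + 2 * ε) * ((n : ℝ) / m - 1) ^ (2 * ε) else 0) ≤
        A * (m / (k : ℝ) + 1) := by
  refine ⟨8, by norm_num, fun m hm k hk _ => ?_⟩
  have hm₀ : 0 < m := by linarith
  have hk₀ : (4 : ℝ) ≤ k := by exact_mod_cast hk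
  set f : ℕ → ℝ := fun n => if m < (n : ℝ) then
    ((n : ℝ) / m) ^ (-(k : ℝ) + 3/2 + 2 * ε) * ((n : ℝ) / m - 1) ^ (2 * ε) else 0
  set s : ℝ := k - 3/2 - 4 * ε with hs_def
  have hs : (k : ℝ) / 8 ≤ s - 1 := by linarith
  obtain ⟨hsum, htsum⟩ := summable_and_tsum_ite_lt_div_rpow_neg_le hm₀ (s := s) (by linarith)
  have hf_nonneg (n : ℕ) : 0 ≤ f n := by
    by_cases hn : m < n
    · have : 1 ≤ (n : ℝ) / m := (one_le_div hm₀).2 hn.le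
      simp only [f, if_pos hn]
      exact mul_nonneg (by positivity) (Real.rpow_nonneg (by linarith) _)
    · simp only [f, if_neg hn, le_refl]
  have hf_le (n : ℕ) : f n ≤ if m < n then ((n : ℝ) / m) ^ (-s) else 0 := by
    by_cases hn : m < n
    · simp only [f, if_pos hn]
      convert rpow_mul_rpow_sub_one_le_rpow_add ((one_le_div hm₀).2 hn.le)
        (by linarith : 0 ≤ 2 * ε) using 2
      ring
    · simp only [f, if_neg hn, le_refl]
  have hf_sum : Summable f := hsum.of_nonneg_of_le hf_nonneg hf_le
  have hdiv : m / (s - 1) ≤ 8 * (m / k) :=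
    calc m / (s - 1) ≤ m / (k / 8) := div_le_div_of_nonneg_left hm₀.le (by positivity) hs
      _ = 8 * (m / k) := by ring
  refine ⟨hf_sum, (hf_sum.tsum_le_tsum hf_le hsum).trans (htsum.trans ?_)⟩
  linarith
end
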